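/- For every k ∈ ℕ, the following two ideals of ℤ[s,t] are equal: the ideal generated by P_{(k+1,0)}(s,t) and P_{(k+2,0)}(s,t), and the ideal generated by the set {P_λ(s,t) : λ ∈ ℕ₀², λ1 + λ2 = k+1}. -/

import Mathlib

open MvPolynomial

noncomputable section

abbrev Rxy : Type := MvPolynomial (Fin 2) ℤ

/-- The fraction field of ℤ[x,y]. -/
abbrev Kxy : Type := FractionRing Rxy

/-- The image of `x` in the fraction field. -/
noncomputable def xx : Kxy := algebraMap Rxy Kxy (X 0)

/-- The image of `y` in the fraction field. -/
noncomputable def yy : Kxy := algebraMap Rxy Kxy (X 1)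

/-- `s = x / y²`. -/
noncomputable def sv : Kxy := xx / yy ^ 2

/-- `t = y / x²`. -/
noncomputable def tv : Kxy := yy / xx ^ 2

/-- Evaluation of a two-variable integer polynomial at `(s, t)` in the fraction field. -/
noncomputable def evST (p : Rxy) : Kxy := aeval ![sv, tv] p

/-- Defining properties of the SU(3) character polynomials `Q a b`
(with the convention `Q a b = 0` whenever `(a, b) ∉ ℕ₀²`). -/
def IsQSU3 (Q : ℤ → ℤ → Rxy) : Prop :=
  (∀ a b : ℤ, (a < 0 ∨ b < 0) → Q a b = 0) ∧
  Q 0 0 = 1 ∧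
  Q 1 0 = X 0 ∧
  (∀ a b : ℤ, 0 ≤ a → 0 ≤ b →
    X 0 * Q a b = Q (a + 1) b + Q a (b - 1) + Q (a - 1) (b + 1)) ∧
  (∀ a b : ℤ, rename (Equiv.swap (0 : Fin 2) 1) (Q a b) = Q b a)

/-- Defining property of the polynomials `P a b` (in the variables `s, t`), namely
`P_λ(x/y², y/x²) = x^{-λ₁} y^{-λ₂} Q_λ(x,y)` in the fraction field of ℤ[x,y]
(with the convention `P a b = 0` whenever `(a, b) ∉ ℕ₀²`). -/
def IsPSU3 (Q P : ℤ → ℤ → Rxy) : Prop :=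
  (∀ a b : ℤ, (a < 0 ∨ b < 0) → P a b = 0) ∧
  (∀ a b : ℤ, 0 ≤ a → 0 ≤ b →
    evST (P a b) = algebraMap Rxy Kxy (Q a b) / (xx ^ a * yy ^ b))


/-!
Evaluation at `s = x/y²`, `t = y/x²` is injective on `ℤ[s,t]`: multiplying by `(xy)^(2d)` sends
the monomials `sᶦtʲ` with `i, j ≤ d` to pairwise distinct monomials `x^(i+2(d-j)) y^(j+2(d-i))`.
Hence the recursions for `x·Q` and (by the symmetry) `y·Q` become three-term recursions for `P`,
and combining the two expresses `t·P_(a,b)` through `P_(a+1,b-1)`, `P_(a+2,b-2)`, `P_(a+3,b-3)`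
on the same line `a + b = N`, while `t·P_(N-1,1) = P_(N,0) - P_(N+1,0)`. Since `P_(n,0) ≡ 1 mod t`,
`t` is invertible modulo `(P_(N,0), P_(N+1,0))`, so induction on `b` puts every `P_(a,b)` with
`a + b = N` into this ideal.
-/

lemma aeval_monomial_fin_two {R A : Type*} [CommSemiring R] [CommSemiring A] [Algebra R A]
    (v : Fin 2 → A) (u : Fin 2 →₀ ℕ) (c : R) :
    aeval v (monomial u c) = algebraMap R A c * (v 0 ^ u 0 * v 1 ^ u 1) := by
  rw [aeval_monomial, Finsupp.prod_fintype _ _ fun _ => pow_zero _, Fin.prod_univ_two]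

lemma Ideal.mem_of_mul_mem_of_dvd_sub_one {R : Type*} [CommRing R] {I : Ideal R} {u p f : R}
    (hp : p ∈ I) (hu : u ∣ p - 1) (huf : u * f ∈ I) : f ∈ I := by
  obtain ⟨g, hg⟩ := hu
  rw [show f = p * f - g * (u * f) by linear_combination (-f) * hg]
  exact sub_mem (I.mul_mem_right f hp) (I.mul_mem_left g huf)

lemma xx_ne_zero : xx ≠ 0 :=
  (IsFractionRing.to_map_eq_zero_iff.not).2 (X_ne_zero 0)

lemma yy_ne_zero : yy ≠ 0 :=
  (IsFractionRing.to_map_eq_zero_iff.not).2 (X_ne_zero 1)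

lemma algebraMap_monomial (u : Fin 2 →₀ ℕ) (c : ℤ) :
    algebraMap Rxy Kxy (monomial u c) = algebraMap ℤ Kxy c * (xx ^ u 0 * yy ^ u 1) := by
  have h : IsScalarTower.toAlgHom ℤ Rxy Kxy = aeval ![xx, yy] :=
    algHom_ext fun i => by fin_cases i <;> simp [xx, yy]
  rw [← IsScalarTower.toAlgHom_apply ℤ, h, aeval_monomial_fin_two]
  rfl

lemma xx_mul_yy_pow_mul_sv_pow_mul_tv_pow {d i j : ℕ} (hi : i ≤ d) (hj : j ≤ d) :
    (xx * yy) ^ (2 * d) * (sv ^ i * tv ^ j) = xx ^ (i + 2 * (d - j)) * yy ^ (j + 2 * (d - i)) := by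
  have hx : xx ^ (2 * d) = xx ^ (2 * j) * xx ^ (2 * (d - j)) := by rw [← pow_add]; congr 1; omega
  have hy : yy ^ (2 * d) = yy ^ (2 * i) * yy ^ (2 * (d - i)) := by rw [← pow_add]; congr 1; omega
  rw [sv, tv, div_pow, div_pow, ← pow_mul, ← pow_mul, mul_pow, hx, hy]
  field_simp [xx_ne_zero, yy_ne_zero]
  ring

lemma evST_injective : Function.Injective evST := by
  rw [show evST = aeval ![sv, tv] from rfl, injective_iff_map_eq_zero]
  intro p hp
  set d := p.totalDegree
  have hle : ∀ m ∈ p.support, m 0 ≤ d ∧ m 1 ≤ d := fun m hm => by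
    have := le_totalDegree hm
    rw [Finsupp.sum_fintype _ _ fun _ => rfl, Fin.sum_univ_two] at this
    omega
  let e (m : Fin 2 →₀ ℕ) : Fin 2 →₀ ℕ :=
    Finsupp.single 0 (m 0 + 2 * (d - m 1)) + Finsupp.single 1 (m 1 + 2 * (d - m 0))
  have he : Set.InjOn e p.support := fun m hm m' hm' h => by
    have h0 := congr($h 0); have h1 := congr($h 1)
    simp only [e, Finsupp.add_apply, Finsupp.single_eq_same, ne_eq, zero_ne_one, one_ne_zero,
      not_false_eq_true, Finsupp.single_eq_of_ne, add_zero, zero_add] at h0 h1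
    have := hle m hm; have := hle m' hm'
    exact Finsupp.ext (Fin.forall_fin_two.2 ⟨by omega, by omega⟩)
  set q : Rxy := ∑ m ∈ p.support, monomial (e m) (coeff m p)
  have hq : algebraMap Rxy Kxy q = (xx * yy) ^ (2 * d) * aeval ![sv, tv] p := by
    conv_rhs => rw [p.as_sum]
    simp only [q, map_sum, Finset.mul_sum, algebraMap_monomial, aeval_monomial_fin_two]
    refine Finset.sum_congr rfl fun m hm => ?_
    rw [mul_left_comm ((xx * yy) ^ _), Matrix.cons_val_zero, Matrix.cons_val_one,
      Matrix.cons_val_zero, xx_mul_yy_pow_mul_sv_pow_mul_tv_pow (hle m hm).1 (hle m hm).2]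
    simp [e]
  rw [hp, mul_zero, IsFractionRing.to_map_eq_zero_iff] at hq
  ext m
  by_cases hm : m ∈ p.support
  · have := congr(coeff (e m) $hq)
    rwa [coeff_sum, Finset.sum_eq_single_of_mem m hm, coeff_monomial, if_pos rfl, coeff_zero]
      at this
    exact fun m' hm' hne => by rw [coeff_monomial, if_neg (hne ∘ he hm' hm)]
  · simpa using hm

variable {Q P : ℤ → ℤ → Rxy}

lemma P_of_neg (hP : IsPSU3 Q P) {a b : ℤ} (h : a < 0 ∨ b < 0) : P a b = 0 := hP.1 a b h

lemma evST_P (hQ : IsQSU3 Q) (hP : IsPSU3 Q P) (a b : ℤ) :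
    evST (P a b) = algebraMap Rxy Kxy (Q a b) / (xx ^ a * yy ^ b) := by
  by_cases h : 0 ≤ a ∧ 0 ≤ b
  · exact hP.2 a b h.1 h.2
  · have hneg : a < 0 ∨ b < 0 := by omega
    simp [P_of_neg hP hneg, hQ.1 a b hneg, evST]

lemma evST_add (p q : Rxy) : evST (p + q) = evST p + evST q := map_add _ p q

lemma evST_mul (p q : Rxy) : evST (p * q) = evST p * evST q := map_mul _ p q

lemma evST_X_zero : evST (X 0) = sv := aeval_X _ 0

lemma evST_X_one : evST (X 1) = tv := aeval_X _ 1

lemma Q_rec_snd (hQ : IsQSU3 Q) {a b : ℤ} (ha : 0 ≤ a) (hb : 0 ≤ b) :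
    X 1 * Q a b = Q a (b + 1) + Q (a - 1) b + Q (a + 1) (b - 1) := by
  simpa [hQ.2.2.2.2] using congr(rename (Equiv.swap (0 : Fin 2) 1) $(hQ.2.2.2.1 b a hb ha))

lemma P_rec_fst (hQ : IsQSU3 Q) (hP : IsPSU3 Q P) {a b : ℤ} (ha : 0 ≤ a) (hb : 0 ≤ b) :
    P a b = P (a + 1) b + X 0 * X 1 * P a (b - 1) + X 1 * P (a - 1) (b + 1) := by
  apply evST_injective
  have hQ' := congr(algebraMap Rxy Kxy $(hQ.2.2.2.1 a b ha hb))
  simp only [map_add, map_mul, ← xx.eq_1] at hQ'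
  simp only [evST_add, evST_mul, evST_X_zero, evST_X_one, evST_P hQ hP, zpow_add_one₀ xx_ne_zero,
    zpow_add_one₀ yy_ne_zero, zpow_sub_one₀ xx_ne_zero, zpow_sub_one₀ yy_ne_zero, sv, tv]
  field_simp [xx_ne_zero, yy_ne_zero]
  linear_combination hQ'

lemma P_rec_snd (hQ : IsQSU3 Q) (hP : IsPSU3 Q P) {a b : ℤ} (ha : 0 ≤ a) (hb : 0 ≤ b) :
    P a b = P a (b + 1) + X 0 * X 1 * P (a - 1) b + X 0 * P (a + 1) (b - 1) := by
  apply evST_injective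
  have hQ' := congr(algebraMap Rxy Kxy $(Q_rec_snd hQ ha hb))
  simp only [map_add, map_mul, ← yy.eq_1] at hQ'
  simp only [evST_add, evST_mul, evST_X_zero, evST_X_one, evST_P hQ hP, zpow_add_one₀ xx_ne_zero,
    zpow_add_one₀ yy_ne_zero, zpow_sub_one₀ xx_ne_zero, zpow_sub_one₀ yy_ne_zero, sv, tv]
  field_simp [xx_ne_zero, yy_ne_zero]
  linear_combination hQ'

lemma X_one_mul_P_one (hQ : IsQSU3 Q) (hP : IsPSU3 Q P) {a : ℤ} (ha : 0 ≤ a + 1) :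
    X 1 * P a 1 = P (a + 1) 0 - P (a + 2) 0 := by
  have h := P_rec_fst hQ hP ha le_rfl
  rw [P_of_neg hP (b := 0 - 1) (by omega), add_sub_cancel_right, zero_add,
    show a + 1 + 1 = a + 2 by ring] at h
  linear_combination -h

lemma X_one_mul_P (hQ : IsQSU3 Q) (hP : IsPSU3 Q P) {a b : ℤ} (ha : 0 ≤ a + 1) (hb : 2 ≤ b) :
    X 1 * P a b = P (a + 1) (b - 1) - P (a + 2) (b - 2) + X 0 * P (a + 3) (b - 3) := by
  have h1 := P_rec_fst hQ hP ha (b := b - 1) (by omega)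
  have h2 := P_rec_snd hQ hP (a := a + 2) (b := b - 2) (by omega) (by omega)
  ring_nf at h1 h2 ⊢
  linear_combination h2 - h1

lemma P_zero_zero (hQ : IsQSU3 Q) (hP : IsPSU3 Q P) : P 0 0 = 1 :=
  evST_injective (by rw [evST_P hQ hP, hQ.2.1]; simp [evST])

lemma X_one_dvd_P_sub_one (hQ : IsQSU3 Q) (hP : IsPSU3 Q P) (n : ℕ) : X 1 ∣ P n 0 - 1 := by
  induction n with
  | zero => simp [P_zero_zero hQ hP]
  | succ n ih =>
    have h := X_one_mul_P_one hQ hP (a := n - 1) (by omega)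
    rw [sub_add_cancel, show (n : ℤ) - 1 + 2 = (n + 1 : ℕ) by push_cast; ring] at h
    rw [show P (n + 1 : ℕ) 0 - 1 = P n 0 - 1 - X 1 * P (n - 1) 1 by rw [h]; ring]
    exact dvd_sub ih (dvd_mul_right _ _)

lemma P_mem_of_add_eq (hQ : IsQSU3 Q) (hP : IsPSU3 Q P) {I : Ideal Rxy} {N : ℤ}
    (h₀ : P N 0 ∈ I) (h₁ : P (N + 1) 0 ∈ I) (hcancel : ∀ f, X 1 * f ∈ I → f ∈ I) :
    ∀ a b, a + b = N → P a b ∈ I := by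
  suffices ∀ n : ℕ, ∀ a b, a + b = N → b < n → P a b ∈ I from
    fun a b h => this (b.toNat + 1) a b h (by omega)
  intro n
  induction n with
  | zero => exact fun a b _ hb => by rw [P_of_neg hP (Or.inr (by omega))]; exact I.zero_mem
  | succ n ih =>
    intro a b hab hbn
    rcases (show b < n ∨ b = n by omega) with hb | rfl
    · exact ih a b hab hb
    by_cases ha : a < 0
    · rw [P_of_neg hP (Or.inl ha)]; exact I.zero_mem
    obtain hb | hb | hb : (n : ℤ) = 0 ∨ (n : ℤ) = 1 ∨ 2 ≤ (n : ℤ) := by omega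
    · rwa [hb, show a = N by omega]
    · rw [hb] at hab ⊢
      refine hcancel _ ?_
      rw [X_one_mul_P_one hQ hP (by omega), show a + 1 = N by omega, show a + 2 = N + 1 by omega]
      exact sub_mem h₀ h₁
    · refine hcancel _ ?_
      rw [X_one_mul_P hQ hP (by omega) hb]
      refine add_mem (sub_mem ?_ ?_) (I.mul_mem_left _ ?_) <;> exact ih _ _ (by omega) (by omega)

theorem stmt_5_general (Q P : ℤ → ℤ → Rxy) (hQ : IsQSU3 Q) (hP : IsPSU3 Q P) (k : ℕ) :
    Ideal.span ({P ((k : ℤ) + 1) 0, P ((k : ℤ) + 2) 0} : Set Rxy) =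
      Ideal.span {p : Rxy | ∃ a b : ℕ, a + b = k + 1 ∧ p = P (a : ℤ) (b : ℤ)} := by
  have hcross := X_one_mul_P_one hQ hP (a := k) (by omega)
  apply le_antisymm
  · rw [Ideal.span_le, Set.insert_subset_iff, Set.singleton_subset_iff]
    have hk₁ : P (k + 1) 0 ∈ Ideal.span {p : Rxy | ∃ a b : ℕ, a + b = k + 1 ∧ p = P a b} :=
      Ideal.subset_span ⟨k + 1, 0, rfl, by push_cast; rfl⟩
    refine ⟨hk₁, ?_⟩
    rw [show P (k + 2) 0 = P (k + 1) 0 - X 1 * P k 1 by rw [hcross]; ring]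
    exact sub_mem hk₁ (Ideal.mul_mem_left _ _ (Ideal.subset_span ⟨k, 1, rfl, by push_cast; rfl⟩))
  · rw [Ideal.span_le]
    rintro _ ⟨a, b, hab, rfl⟩
    have h₁ : P (k + 1 + 1) 0 ∈ Ideal.span ({P ((k : ℤ) + 1) 0, P ((k : ℤ) + 2) 0} : Set Rxy) :=
      Ideal.subset_span (by rw [add_assoc]; norm_num)
    refine P_mem_of_add_eq hQ hP (Ideal.subset_span (Set.mem_insert _ _)) h₁
      (fun f => Ideal.mem_of_mul_mem_of_dvd_sub_one h₁ ?_) a b (by omega)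
    exact_mod_cast X_one_dvd_P_sub_one hQ hP (k + 2)

theorem stmt_5 (Q P : ℤ → ℤ → Rxy) (hQ : IsQSU3 Q) (hP : IsPSU3 Q P) (k : ℕ) (hk : 1 ≤ k) :
    Ideal.span ({P ((k : ℤ) + 1) 0, P ((k : ℤ) + 2) 0} : Set Rxy) =
      Ideal.span {p : Rxy | ∃ a b : ℕ, a + b = k + 1 ∧ p = P (a : ℤ) (b : ℤ)} :=
  stmt_5_general Q P hQ hP k
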